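/- Let (M,g) be smooth compact connected with first nonzero Laplacian eigenvalue λ₁ > 0 and Ricci bound |Ric| ≤ K. Then for u = (u₁, u₂) in R(Π) ∩ D(Π), where Π is the Hodge–Dirac-type operator Π = Γ + Γ* on L²(M) ⊕ L²(T*M) with Γ(u₁,u₂) = (0, ∇u₁), one has ‖∇u₁‖ + ‖∇u₂‖ + ‖u‖ ≤ C‖Πu‖, where C depends only on λ₁ and K. (Hypothesis (H8)-2 of the Axelsson–Keith–McIntosh framework for the homogeneous operator.) -/

import Mathlib

/-! The range of `∇*` is orthogonal to `ker ∇`, so the Poincaré inequality bounds `‖u₁‖` by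
`‖∇u₁‖`. As `∇` is closed, `ker ∇` is closed and `u₂ = ∇w` with `w ⊥ ker ∇`; then
`‖u₂‖² = ⟪∇*u₂, w⟫ ≤ ‖∇*u₂‖ ‖w‖ ≤ λ₁^{-1/2} ‖∇*u₂‖ ‖u₂‖`, a Poincaré inequality for `∇*` on the
range of `∇`. The Bochner inequality then bounds `‖∇u₂‖²` by `‖∇*u₂‖² + K ‖u₂‖²`. -/

open scoped InnerProductSpace

namespace LinearPMap

section Kernel

variable {R E F : Type*} [CommRing R] [AddCommGroup E] [Module R E] [AddCommGroup F] [Module R F]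

def ker (f : E →ₗ.[R] F) : Submodule R E :=
  (LinearMap.ker f.toFun).map f.domain.subtype

theorem mem_ker_iff_mem_graph {f : E →ₗ.[R] F} {x : E} : x ∈ f.ker ↔ (x, 0) ∈ f.graph := by
  simp only [ker, Submodule.mem_map, LinearMap.mem_ker, Submodule.subtype_apply, mem_graph_iff]
  exact ⟨fun ⟨y, hy, hyx⟩ ↦ ⟨y, hyx, hy⟩, fun ⟨y, hyx, hy⟩ ↦ ⟨y, hy, hyx⟩⟩

theorem IsClosed.isClosed_ker [TopologicalSpace E] [TopologicalSpace F] {f : E →ₗ.[R] F}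
    (hf : f.IsClosed) : _root_.IsClosed (f.ker : Set E) := by
  have : (f.ker : Set E) = (fun x ↦ (x, (0 : F))) ⁻¹' f.graph := by
    ext x; exact mem_ker_iff_mem_graph
  rw [this]
  exact hf.preimage (continuous_id.prodMk continuous_const)

end Kernel

section Adjoint

variable {𝕜 E F : Type*} [RCLike 𝕜]
  [NormedAddCommGroup E] [InnerProductSpace 𝕜 E] [CompleteSpace E]
  [NormedAddCommGroup F] [InnerProductSpace 𝕜 F]
  {T : E →ₗ.[𝕜] F}

theorem range_adjoint_le_orthogonal_ker (hT : Dense (T.domain : Set E)) :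
    LinearMap.range T†.toFun ≤ T.kerᗮ := by
  rintro _ ⟨y, rfl⟩
  rw [Submodule.mem_orthogonal]
  rintro _ ⟨x, hx, rfl⟩
  rw [inner_eq_zero_symm]
  change ⟪T† y, (x : E)⟫_𝕜 = 0
  have hx0 : T x = 0 := hx
  rw [adjoint_isFormalAdjoint hT y x, hx0, inner_zero_right]

theorem IsClosed.exists_mem_orthogonal_ker_of_mem_range (hT : T.IsClosed) {y : F}
    (hy : y ∈ LinearMap.range T.toFun) : ∃ x : T.domain, (x : E) ∈ T.kerᗮ ∧ T x = y := by
  obtain ⟨v, rfl⟩ := hy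
  have : CompleteSpace T.ker := hT.isClosed_ker.completeSpace_coe
  obtain ⟨_, ⟨k, hk, rfl⟩, z, hz, hvkz⟩ := T.ker.exists_add_mem_mem_orthogonal (v : E)
  refine ⟨v - k, ?_, ?_⟩
  · simpa [hvkz] using hz
  · have hk0 : T k = 0 := hk
    rw [map_sub, hk0, sub_zero]
    rfl

theorem mul_norm_sq_le_norm_adjoint_sq (hT : Dense (T.domain : Set E)) {c : ℝ} (hc : 0 ≤ c)
    (hP : ∀ u : T.domain, (u : E) ∈ T.kerᗮ → c * ‖(u : E)‖ ^ 2 ≤ ‖T u‖ ^ 2)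
    (y : T†.domain) (x : T.domain) (hx : (x : E) ∈ T.kerᗮ) (hxy : T x = y) :
    c * ‖(y : F)‖ ^ 2 ≤ ‖T† y‖ ^ 2 := by
  have hpair : ‖(y : F)‖ ^ 2 ≤ ‖T† y‖ * ‖(x : E)‖ := by
    calc ‖(y : F)‖ ^ 2 = RCLike.re ⟪T† y, (x : E)⟫_𝕜 := by
          rw [adjoint_isFormalAdjoint hT y x, hxy, inner_self_eq_norm_sq]
      _ ≤ ‖T† y‖ * ‖(x : E)‖ := re_inner_le_norm _ _
  have hPx := hP x hx
  rw [hxy] at hPx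
  have hcx : c * ‖(x : E)‖ ≤ ‖T† y‖ := by
    rcases (norm_nonneg (x : E)).eq_or_lt with h0 | hpos
    · rw [← h0, mul_zero]; exact norm_nonneg _
    · nlinarith
  calc c * ‖(y : F)‖ ^ 2 ≤ c * (‖T† y‖ * ‖(x : E)‖) := mul_le_mul_of_nonneg_left hpair hc
    _ = ‖T† y‖ * (c * ‖(x : E)‖) := by ring
    _ ≤ ‖T† y‖ * ‖T† y‖ := mul_le_mul_of_nonneg_left hcx (norm_nonneg _)
    _ = ‖T† y‖ ^ 2 := (sq _).symm

end Adjoint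

end LinearPMap

theorem add_add_sqrt_le_mul_sqrt {a b x y z lam K : ℝ} (hlam : 0 < lam) (hK : 0 ≤ K)
    (hx : lam * x ^ 2 ≤ b ^ 2) (hy : lam * y ^ 2 ≤ a ^ 2) (hz : z ^ 2 ≤ a ^ 2 + K * y ^ 2) :
    b + z + √(x ^ 2 + y ^ 2) ≤
      (1 + √(1 + K / lam) + √(1 / lam)) * √(a ^ 2 + b ^ 2) := by
  have hKy : K * y ^ 2 ≤ K / lam * a ^ 2 := by
    rw [div_mul_eq_mul_div, le_div_iff₀ hlam]
    nlinarith
  have hb' : b ≤ √(a ^ 2 + b ^ 2) := Real.le_sqrt_of_sq_le (by nlinarith)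
  have hz' : z ≤ √(1 + K / lam) * √(a ^ 2 + b ^ 2) := by
    rw [← Real.sqrt_mul (by positivity)]
    exact Real.le_sqrt_of_sq_le (by nlinarith [div_nonneg hK hlam.le])
  have hxy : √(x ^ 2 + y ^ 2) ≤ √(1 / lam) * √(a ^ 2 + b ^ 2) := by
    rw [← Real.sqrt_mul (by positivity)]
    refine Real.sqrt_le_sqrt ?_
    rw [one_div_mul_eq_div, le_div_iff₀ hlam]
    linarith
  linarith

theorem stmt18_general {H1 H2 K2 : Type*}
    [NormedAddCommGroup H1] [InnerProductSpace ℝ H1] [CompleteSpace H1]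
    [NormedAddCommGroup H2] [InnerProductSpace ℝ H2]
    [NormedAddCommGroup K2] [InnerProductSpace ℝ K2]
    (grad : H1 →ₗ.[ℝ] H2) (hdense : Dense (grad.domain : Set H1)) (hclosed : grad.IsClosed)
    (grad2 : H2 →ₗ.[ℝ] K2)
    (lam1 Kb : ℝ) (hlam1 : 0 < lam1) (hKb : 0 ≤ Kb)
    (hPoincare : ∀ u : grad.domain,
      (u : H1) ∈ ((LinearMap.ker grad.toFun).map grad.domain.subtype)ᗮ →
      lam1 * ‖(u : H1)‖ ^ 2 ≤ ‖grad u‖ ^ 2)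
    (hBochner : ∀ (v : grad.domain) (h : grad v ∈ grad.adjoint.domain),
      ∃ hm : grad v ∈ grad2.domain,
        ‖grad2 ⟨grad v, hm⟩‖ ^ 2 ≤ ‖grad.adjoint ⟨grad v, h⟩‖ ^ 2 + Kb * ‖grad v‖ ^ 2) :
    ∃ C : ℝ, 0 < C ∧
      ∀ (u₁ : H1) (u₂ : H2) (h₁ : u₁ ∈ grad.domain) (h₂ : u₂ ∈ grad.adjoint.domain),
        u₁ ∈ LinearMap.range grad.adjoint.toFun →
        u₂ ∈ LinearMap.range grad.toFun →
        ∃ h₂₂ : u₂ ∈ grad2.domain,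
          ‖grad ⟨u₁, h₁⟩‖ + ‖grad2 ⟨u₂, h₂₂⟩‖ + Real.sqrt (‖u₁‖ ^ 2 + ‖u₂‖ ^ 2) ≤
            C * Real.sqrt (‖grad.adjoint ⟨u₂, h₂⟩‖ ^ 2 + ‖grad ⟨u₁, h₁⟩‖ ^ 2) := by
  refine ⟨1 + √(1 + Kb / lam1) + √(1 / lam1), by positivity, ?_⟩
  intro u₁ u₂ h₁ h₂ hu₁ hu₂
  obtain ⟨w, hw, rfl⟩ := hclosed.exists_mem_orthogonal_ker_of_mem_range hu₂
  obtain ⟨hm, hBochner_w⟩ := hBochner w h₂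
  refine ⟨hm, add_add_sqrt_le_mul_sqrt hlam1 hKb ?_ ?_ hBochner_w⟩
  · exact hPoincare ⟨u₁, h₁⟩ (grad.range_adjoint_le_orthogonal_ker hdense hu₁)
  · exact grad.mul_norm_sq_le_norm_adjoint_sq hdense hlam1.le hPoincare ⟨grad w, h₂⟩ w hw rfl

theorem stmt18 {H1 H2 K2 : Type*}
    [NormedAddCommGroup H1] [InnerProductSpace ℝ H1] [CompleteSpace H1]
    [NormedAddCommGroup H2] [InnerProductSpace ℝ H2] [CompleteSpace H2]
    [NormedAddCommGroup K2] [InnerProductSpace ℝ K2] [CompleteSpace K2]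
    (grad : H1 →ₗ.[ℝ] H2) (hdense : Dense (grad.domain : Set H1)) (hclosed : grad.IsClosed)
    (grad2 : H2 →ₗ.[ℝ] K2)
    (lam1 Kb : ℝ) (hlam1 : 0 < lam1) (hKb : 0 ≤ Kb)
    (hPoincare : ∀ u : grad.domain,
      (u : H1) ∈ ((LinearMap.ker grad.toFun).map grad.domain.subtype)ᗮ →
      lam1 * ‖(u : H1)‖ ^ 2 ≤ ‖grad u‖ ^ 2)
    (hBochner : ∀ (v : grad.domain) (h : grad v ∈ grad.adjoint.domain),
      ∃ hm : grad v ∈ grad2.domain,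
        ‖grad2 ⟨grad v, hm⟩‖ ^ 2 ≤ ‖grad.adjoint ⟨grad v, h⟩‖ ^ 2 + Kb * ‖grad v‖ ^ 2) :
    ∃ C : ℝ, 0 < C ∧
      ∀ (u₁ : H1) (u₂ : H2) (h₁ : u₁ ∈ grad.domain) (h₂ : u₂ ∈ grad.adjoint.domain),
        u₁ ∈ LinearMap.range grad.adjoint.toFun →
        u₂ ∈ LinearMap.range grad.toFun →
        ∃ h₂₂ : u₂ ∈ grad2.domain,
          ‖grad ⟨u₁, h₁⟩‖ + ‖grad2 ⟨u₂, h₂₂⟩‖ + Real.sqrt (‖u₁‖ ^ 2 + ‖u₂‖ ^ 2) ≤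
            C * Real.sqrt (‖grad.adjoint ⟨u₂, h₂⟩‖ ^ 2 + ‖grad ⟨u₁, h₁⟩‖ ^ 2) :=
  stmt18_general grad hdense hclosed grad2 lam1 Kb hlam1 hKb hPoincare hBochner
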